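/- arXiv:1910.07034 — 5 statements merged into one kernel-verified Lean document; each statement's English description precedes it below -/
import Mathlib

section
/- Let M ≥ 1 and let ζ, ζ' ∈ kˣ with ζ^M = ζ'^M = 1. Then ω_ζ(a,b,c)·ω_{ζ'}(a,b,c) = ω_{ζζ'}(a,b,c) for all a,b,c ∈ ZMod M; moreover, ω_ζ is a 3-coboundary (i.e., there exists a normalized 2-cochain u : (ZMod M)² → kˣ with ω_ζ(a,b,c) = u(b,c)·u(a+b,c)⁻¹·u(a,b+c)·u(a,b)⁻¹ for all a,b,c) if and only if ζ = 1. -/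
/-!
Taking the product of the coboundary identity over `b` makes the right-hand side collapse to `1`,
since `b ↦ a + b` and `b ↦ b + c` permute `ZMod M`. On the left, exactly `c̄` values of `b` carry
(`b̄ + c̄ ≥ M`), so `∏_b ω_ζ(a, b, c) = ζ^(ā c̄)`; at `a = c = 1` this gives `ζ^(1 % M) = 1`,
which together with `ζ^M = 1` forces `ζ = 1`.
-/

/-- The 3-cocycle `ω_ζ` on `ZMod M` attached to an `M`-th root of unity `ζ`. -/
def omegaZeta {k : Type*} [Field k] (M : ℕ) (ζ : kˣ) (a b c : ZMod M) : kˣ :=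
  if M ≤ b.val + c.val then ζ ^ a.val else 1

open Finset

theorem Fintype.prod_coboundary_eq_one {G H : Type*} [AddGroup G] [Fintype G] [CommGroup H]
    (u : G → G → H) (a c : G) :
    ∏ b, u b c * (u (a + b) c)⁻¹ * u a (b + c) * (u a b)⁻¹ = 1 := by
  have hshift : ∏ b, u (a + b) c = ∏ b, u b c :=
    Fintype.prod_equiv (Equiv.addLeft a) _ _ fun _ => rfl
  have hshift' : ∏ b, u a (b + c) = ∏ b, u a b :=
    Fintype.prod_equiv (Equiv.addRight c) _ _ fun _ => rfl
  rw [prod_mul_distrib, prod_mul_distrib, prod_mul_distrib, prod_inv_distrib, prod_inv_distrib,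
    hshift, hshift', mul_inv_cancel, one_mul, mul_inv_cancel]

theorem ZMod.card_filter_le_val_add_val {M : ℕ} [NeZero M] (c : ZMod M) :
    #{b : ZMod M | M ≤ b.val + c.val} = c.val := by
  have hc := c.val_lt
  have hcard : #{b : ZMod M | M ≤ b.val + c.val} = #(Ico (M - c.val) M) := by
    apply card_nbij' ZMod.val (fun n => (n : ZMod M))
    · intro b hb
      simp only [coe_filter, mem_univ, true_and, Set.mem_ofPred_eq, coe_Ico, Set.mem_Ico] at hb ⊢
      exact ⟨by omega, b.val_lt⟩
    · intro n hn
      simp only [coe_Ico, Set.mem_Ico] at hn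
      simp only [coe_filter, mem_univ, true_and, Set.mem_ofPred_eq, ZMod.val_natCast,
        Nat.mod_eq_of_lt hn.2]
      omega
    · intro b _
      exact ZMod.natCast_zmod_val b
    · intro n hn
      simp only [coe_Ico, Set.mem_Ico] at hn
      exact ZMod.val_cast_of_lt hn.2
  rw [hcard, Nat.card_Ico]; omega

theorem omegaZeta_mul {k : Type*} [Field k] (M : ℕ) (ζ ζ' : kˣ) (a b c : ZMod M) :
    omegaZeta M ζ a b c * omegaZeta M ζ' a b c = omegaZeta M (ζ * ζ') a b c := by
  unfold omegaZeta
  split_ifs <;> simp [mul_pow]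

theorem omegaZeta_one {k : Type*} [Field k] (M : ℕ) (a b c : ZMod M) :
    omegaZeta M (1 : kˣ) a b c = 1 := by
  simp [omegaZeta]

theorem prod_omegaZeta {k : Type*} [Field k] {M : ℕ} [NeZero M] (ζ : kˣ) (a c : ZMod M) :
    ∏ b, omegaZeta M ζ a b c = ζ ^ (a.val * c.val) := by
  simp only [omegaZeta, prod_ite, prod_const_one, mul_one, prod_const,
    ZMod.card_filter_le_val_add_val, pow_mul]

theorem omegaZeta_mul_and_coboundary_iff_general
    {k : Type*} [Field k]
    (M : ℕ) (hM : 1 ≤ M) (ζ ζ' : kˣ) (hζ : ζ ^ M = 1) :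
    (∀ a b c : ZMod M,
      omegaZeta M ζ a b c * omegaZeta M ζ' a b c = omegaZeta M (ζ * ζ') a b c) ∧
    ((∃ u : ZMod M → ZMod M → kˣ,
        (∀ a : ZMod M, u a 0 = 1) ∧ (∀ b : ZMod M, u 0 b = 1) ∧
        (∀ a b c : ZMod M,
          omegaZeta M ζ a b c = u b c * (u (a + b) c)⁻¹ * u a (b + c) * (u a b)⁻¹)) ↔
      ζ = 1) := by
  have : NeZero M := ⟨by omega⟩
  refine ⟨omegaZeta_mul M ζ ζ', ⟨?_, ?_⟩⟩
  · rintro ⟨u, -, -, hu⟩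
    have hval : (1 : ZMod M).val * (1 : ZMod M).val = 1 % M := by
      rw [ZMod.val_one_eq_one_mod]
      rcases Nat.lt_or_ge 1 M with h | h
      · simp [Nat.mod_eq_of_lt h]
      · simp [Nat.le_antisymm h hM]
    calc ζ = ζ ^ (1 % M) := (pow_one ζ).symm.trans (pow_eq_pow_mod 1 hζ)
      _ = ∏ b, omegaZeta M ζ 1 b 1 := by rw [prod_omegaZeta, hval]
      _ = 1 := by simp_rw [hu]; exact Fintype.prod_coboundary_eq_one u 1 1
  · rintro rfl
    exact ⟨fun _ _ => 1, fun _ => rfl, fun _ => rfl, fun _ _ _ => by simp [omegaZeta_one]⟩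

theorem omegaZeta_mul_and_coboundary_iff
    {k : Type*} [Field k] [IsAlgClosed k] [CharZero k]
    (M : ℕ) (hM : 1 ≤ M) (ζ ζ' : kˣ) (hζ : ζ ^ M = 1) (hζ' : ζ' ^ M = 1) :
    (∀ a b c : ZMod M,
      omegaZeta M ζ a b c * omegaZeta M ζ' a b c = omegaZeta M (ζ * ζ') a b c) ∧
    ((∃ u : ZMod M → ZMod M → kˣ,
        (∀ a : ZMod M, u a 0 = 1) ∧ (∀ b : ZMod M, u 0 b = 1) ∧
        (∀ a b c : ZMod M,
          omegaZeta M ζ a b c = u b c * (u (a + b) c)⁻¹ * u a (b + c) * (u a b)⁻¹)) ↔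
      ζ = 1) :=
  omegaZeta_mul_and_coboundary_iff_general M hM ζ ζ' hζ
end

section
/- There is an isomorphism of abelian groups between the third group cohomology of the cyclic group ZMod M (M ≥ 1) with coefficients in the trivial representation on Additive kˣ and the group ZMod M itself; that is, H³(ZMod M, kˣ) ≅ ℤ/Mℤ when kˣ carries the trivial ZMod M-action. -/
/-!
For a finite cyclic group `G = ⟨g⟩`, the periodic resolution shows that odd-degree cohomology of
`A` is `ker N / im (g - 1)`, with `N` the norm. For the trivial action `g - 1 = 0` and `N` is
multiplication by `|G|`, so `H³(ℤ/M, kˣ)` is the `M`-torsion of `kˣ`, i.e. the group `μ_M(k)` of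
`M`-th roots of unity, which is cyclic of order `M` because `k` is separably closed and `M ≠ 0`
in `k`.
-/

open CategoryTheory

namespace Rep

lemma applyAsHom_trivial_sub_id_eq_zero {k G : Type*} [CommRing k] [CommMonoid G] (V : Type*)
    [AddCommGroup V] [Module k V] (g : G) : applyAsHom (trivial k G V) g - 𝟙 _ = 0 := by
  ext
  simp [sub_hom, applyAsHom]

lemma ker_norm_trivial {k G : Type*} [CommRing k] [Group G] [Fintype G] (V : Type*)
    [AddCommGroup V] [Module k V] :
    LinearMap.ker (trivial k G V).norm.hom.toLinearMap =
      Submodule.torsionBy k V (Fintype.card G) := by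
  ext
  simp [Submodule.mem_torsionBy_iff, norm, Representation.norm, Nat.cast_smul_eq_nsmul]

namespace FiniteCyclicGroup

universe u

variable (k : Type u) {G : Type u} [CommRing k] [CommGroup G] [Fintype G] (V : Type u)
  [AddCommGroup V] [Module k V] {g : G} (hg : ∀ x, x ∈ Subgroup.zpowers g)

noncomputable def groupCohomologyTrivialIsoOdd (i : ℕ) (hi : Odd i) :
    groupCohomology (trivial k G V) i ≅
      ModuleCat.of k (Submodule.torsionBy k V (Fintype.card G)) :=
  groupCohomologyIsoOdd _ g hg i hi ≪≫
    (ShortComplex.asIsoHomologyπ _ (by ext; simp [applyAsHom_trivial_sub_id_eq_zero])).symm ≪≫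
    ShortComplex.moduleCatCyclesIso _ ≪≫ (LinearEquiv.ofEq _ _ (ker_norm_trivial V)).toModuleIso

end FiniteCyclicGroup

end Rep

def rootsOfUnityAddEquivTorsionBy (R : Type*) [CommMonoid R] (n : ℕ) :
    Additive (rootsOfUnity n R) ≃+ Submodule.torsionBy ℤ (Additive Rˣ) n where
  toFun x := ⟨Additive.ofMul x.toMul.1, by
    rw [Submodule.mem_torsionBy_iff, natCast_zsmul, ← ofMul_pow, (mem_rootsOfUnity _ _).1 x.toMul.2,
      ofMul_one]⟩
  invFun x := Additive.ofMul ⟨x.1.toMul, by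
    rw [mem_rootsOfUnity, ← toMul_nsmul, ← natCast_zsmul, (Submodule.mem_torsionBy_iff _ _).1 x.2,
      toMul_zero]⟩
  left_inv _ := rfl
  right_inv _ := rfl
  map_add' _ _ := rfl

noncomputable def zmodAddEquivRootsOfUnity (k : Type*) [Field k] [IsSepClosed k] (n : ℕ)
    [NeZero (n : k)] : ZMod n ≃+ Additive (rootsOfUnity n k) :=
  have : NeZero n := .of_neZero_natCast k
  MulEquiv.toAdditiveRight <| mulEquivOfCyclicCardEq <| by
    rw [HasEnoughRootsOfUnity.natCard_rootsOfUnity]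
    exact Nat.card_zmod n

theorem third_cohomology_of_cyclic_group_with_units_coeffs
    {k : Type} [Field k] [IsAlgClosed k] [CharZero k]
    (M : ℕ) (hM : 1 ≤ M) :
    Nonempty
      ((groupCohomology
          (Rep.trivial ℤ (Multiplicative (ZMod M)) (Additive kˣ)) 3) ≃+ ZMod M) := by
  have : NeZero M := ⟨by omega⟩
  obtain ⟨g, hg⟩ := IsCyclic.exists_generator (α := Multiplicative (ZMod M))
  have e := (Rep.FiniteCyclicGroup.groupCohomologyTrivialIsoOdd ℤ (Additive kˣ) hg 3
    (by decide)).toLinearEquiv.toAddEquiv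
  rw [show Fintype.card (Multiplicative (ZMod M)) = M by simp] at e
  exact ⟨e.trans ((rootsOfUnityAddEquivTorsionBy k M).symm.trans
    (zmodAddEquivRootsOfUnity k M).symm)⟩
end

section
/- Let M ≥ 1 and let ξ ∈ kˣ satisfy ξ^{M²} = 1 and ξ^{2M} = 1. Define σ_ξ : (ZMod M)² → kˣ by σ_ξ(a,b) = ξ^{ā·b̄}. Then the pair (ω_{ξ^M}, σ_ξ) satisfies the abelian 3-cocycle identity: ω_{ξ^M}(a,b,c)·ω_{ξ^M}(b,c,a)·σ_ξ(a, b+c) = ω_{ξ^M}(b,a,c)·σ_ξ(a,b)·σ_ξ(a,c) for all a,b,c ∈ ZMod M. -/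
/-- The 2-cochain `σ_ξ(a,b) = ξ^(ā·b̄)` on `ZMod M`. -/
def sigmaXi {k : Type*} [Field k] (M : ℕ) (ξ : kˣ) (a b : ZMod M) : kˣ :=
  ξ ^ (a.val * b.val)

section

variable {k : Type*} [Field k] (M : ℕ)

theorem omegaZeta_comm_right (ζ : kˣ) (a b c : ZMod M) :
    omegaZeta M ζ a b c = omegaZeta M ζ a c b := by
  unfold omegaZeta
  rw [add_comm]

theorem omegaZeta_mul_sigmaXi_add [NeZero M] (ξ : kˣ) (a b c : ZMod M) :
    omegaZeta M (ξ ^ M) a b c * sigmaXi M ξ a (b + c) = sigmaXi M ξ a b * sigmaXi M ξ a c := by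
  unfold omegaZeta sigmaXi
  split_ifs with h
  · rw [← pow_mul, ← pow_add, ← pow_add, ← mul_add, ZMod.val_add_val_of_le h]
    congr 1; ring
  · rw [one_mul, ZMod.val_add_of_lt (not_le.mp h), ← pow_add, mul_add]

end

theorem abelian_three_cocycle_identity_general
    {k : Type*} [Field k]
    (M : ℕ) (hM : 1 ≤ M) (ξ : kˣ) :
    ∀ a b c : ZMod M,
      omegaZeta M (ξ ^ M) a b c * omegaZeta M (ξ ^ M) b c a * sigmaXi M ξ a (b + c) =
        omegaZeta M (ξ ^ M) b a c * sigmaXi M ξ a b * sigmaXi M ξ a c := by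
  intro a b c
  have : NeZero M := ⟨by omega⟩
  rw [omegaZeta_comm_right M _ b c a, mul_right_comm, omegaZeta_mul_sigmaXi_add]
  exact (mul_rotate _ _ _).symm

theorem abelian_three_cocycle_identity
    {k : Type*} [Field k] [IsAlgClosed k] [CharZero k]
    (M : ℕ) (hM : 1 ≤ M) (ξ : kˣ) (hξ1 : ξ ^ (M ^ 2) = 1) (hξ2 : ξ ^ (2 * M) = 1) :
    ∀ a b c : ZMod M,
      omegaZeta M (ξ ^ M) a b c * omegaZeta M (ξ ^ M) b c a * sigmaXi M ξ a (b + c) =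
        omegaZeta M (ξ ^ M) b a c * sigmaXi M ξ a b * sigmaXi M ξ a c :=
  abelian_three_cocycle_identity_general M hM ξ
end

section
/- Let M ≥ 1, let d = gcd(M², 2M) (so d = M if M is odd and d = 2M if M is even), and let q : ZMod M → kˣ be a quadratic form on ZMod M with values in kˣ. Then there exists a unique ξ ∈ kˣ with ξ^d = 1 such that q(a) = ξ^{ā²} for all a ∈ ZMod M. (Thus quadratic forms on ℤ/Mℤ with values in kˣ are in bijection with the d-th roots of unity in k.) -/
/-!
With `β(a, b) = q(a + b) q(a)⁻¹ q(b)⁻¹`, biadditivity and `q(-a) = q(a)` give `q(0) = 1` and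
`β(a, a) = q(a)²`, hence `β(n • a, a) = q(a)^(2n)`; since `q((n + 1) • a) = β(n • a, a) q(n • a) q(a)`,
induction gives `q(n • a) = q(a)^(n²)`. On `ZMod M` every element is `±(a.val • 1)`, so
`q(a) = q(1)^(a.val²)`, and `M • 1 = 0` forces `q(1)^(M²) = q(1)^(2M) = 1`.
-/

section MulPolar

variable {A G : Type*} [AddGroup A] [CommGroup G]

def mulPolar (q : A → G) (a b : A) : G := q (a + b) * (q a)⁻¹ * (q b)⁻¹

structure IsQuadraticMulMap (q : A → G) : Prop where
  map_neg : ∀ a, q (-a) = q a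
  mulPolar_add_left : ∀ a a' b, mulPolar q (a + a') b = mulPolar q a b * mulPolar q a' b
  mulPolar_add_right : ∀ a b b', mulPolar q a (b + b') = mulPolar q a b * mulPolar q a b'

namespace IsQuadraticMulMap

variable {q : A → G} (hq : IsQuadraticMulMap q)
include hq

lemma map_zero : q 0 = 1 := by
  simpa [mulPolar] using hq.mulPolar_add_right 0 0 0

lemma mulPolar_self (a : A) : mulPolar q a a = q a ^ 2 := by
  have h := hq.mulPolar_add_right a a (-a)
  simp only [mulPolar, add_neg_cancel, add_zero, hq.map_neg, hq.map_zero, mul_inv_cancel, inv_one,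
    one_mul] at h
  rw [eq_comm, mul_eq_one_iff_eq_inv, ← mul_inv, inv_inv] at h
  rw [mulPolar, h, sq]

lemma mulPolar_nsmul_self (a : A) (n : ℕ) : mulPolar q (n • a) a = q a ^ (2 * n) := by
  induction n with
  | zero => simp [mulPolar, hq.map_zero]
  | succ n ih => rw [succ_nsmul, hq.mulPolar_add_left, ih, hq.mulPolar_self, ← pow_add]; ring_nf

lemma map_nsmul (a : A) (n : ℕ) : q (n • a) = q a ^ (n ^ 2) := by
  induction n with
  | zero => simp [hq.map_zero]
  | succ n ih =>
    have h := hq.mulPolar_nsmul_self a n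
    rw [mulPolar, mul_inv_eq_iff_eq_mul, mul_inv_eq_iff_eq_mul, ← succ_nsmul, ih] at h
    rw [h, ← pow_succ, ← pow_add]
    ring_nf

lemma pow_gcd_eq_one_of_nsmul_eq_zero {a : A} {n : ℕ} (ha : n • a = 0) :
    q a ^ Nat.gcd (n ^ 2) (2 * n) = 1 := by
  refine pow_gcd_eq_one.mpr ⟨?_, ?_⟩
  · rw [← hq.map_nsmul, ha, hq.map_zero]
  · rw [← hq.mulPolar_nsmul_self, ha, mulPolar, zero_add, hq.map_zero, inv_one, mul_one,
      mul_inv_cancel]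

end IsQuadraticMulMap

end MulPolar

lemma ZMod.natCast_val_eq_or_eq_neg {M : ℕ} (a : ZMod M) :
    (a.val : ZMod M) = a ∨ (a.val : ZMod M) = -a := by
  cases M with
  | zero =>
    change ((Int.natAbs a : ℕ) : ℤ) = a ∨ ((Int.natAbs a : ℕ) : ℤ) = -a
    omega
  | succ M => exact Or.inl (ZMod.natCast_zmod_val a)

lemma IsQuadraticMulMap.map_zmod_eq_pow_val_sq {M : ℕ} {G : Type*} [CommGroup G]
    {q : ZMod M → G} (hq : IsQuadraticMulMap q) (a : ZMod M) : q a = q 1 ^ (a.val ^ 2) := by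
  rw [← hq.map_nsmul, nsmul_one]
  rcases a.natCast_val_eq_or_eq_neg with h | h <;> rw [h]
  exact (hq.map_neg a).symm

lemma pow_zmod_val_one_sq_of_pow_gcd_eq_one {G : Type*} [Monoid G] {M : ℕ} {ξ : G}
    (hξ : ξ ^ Nat.gcd (M ^ 2) (2 * M) = 1) : ξ ^ ((1 : ZMod M).val ^ 2) = ξ := by
  rcases eq_or_ne M 1 with rfl | hM
  · norm_num at hξ
    simp [hξ]
  · rw [ZMod.val_one'' hM, one_pow, pow_one]

theorem quadratic_form_on_zmod_classified_general
    {k : Type*} [Field k]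
    (M : ℕ) (q : ZMod M → kˣ)
    (hq_neg : ∀ a : ZMod M, q (-a) = q a)
    (hq_add_left : ∀ a a' b : ZMod M,
      q (a + a' + b) * (q (a + a'))⁻¹ * (q b)⁻¹ =
        (q (a + b) * (q a)⁻¹ * (q b)⁻¹) * (q (a' + b) * (q a')⁻¹ * (q b)⁻¹))
    (hq_add_right : ∀ a b b' : ZMod M,
      q (a + (b + b')) * (q a)⁻¹ * (q (b + b'))⁻¹ =
        (q (a + b) * (q a)⁻¹ * (q b)⁻¹) * (q (a + b') * (q a)⁻¹ * (q b')⁻¹)) :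
    ∃! ξ : kˣ, ξ ^ (Nat.gcd (M ^ 2) (2 * M)) = 1 ∧
      ∀ a : ZMod M, q a = ξ ^ (a.val ^ 2) := by
  have hq : IsQuadraticMulMap q := ⟨hq_neg, hq_add_left, hq_add_right⟩
  refine ⟨q 1, ⟨?_, hq.map_zmod_eq_pow_val_sq⟩, ?_⟩
  · exact hq.pow_gcd_eq_one_of_nsmul_eq_zero (by rw [nsmul_one, ZMod.natCast_self])
  · rintro ξ ⟨hξ, hqξ⟩
    rw [hqξ 1, pow_zmod_val_one_sq_of_pow_gcd_eq_one hξ]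

theorem quadratic_form_on_zmod_classified
    {k : Type*} [Field k] [IsAlgClosed k] [CharZero k]
    (M : ℕ) (hM : 1 ≤ M) (q : ZMod M → kˣ)
    (hq_neg : ∀ a : ZMod M, q (-a) = q a)
    (hq_symm : ∀ a b : ZMod M,
      q (a + b) * (q a)⁻¹ * (q b)⁻¹ = q (b + a) * (q b)⁻¹ * (q a)⁻¹)
    (hq_add_left : ∀ a a' b : ZMod M,
      q (a + a' + b) * (q (a + a'))⁻¹ * (q b)⁻¹ =
        (q (a + b) * (q a)⁻¹ * (q b)⁻¹) * (q (a' + b) * (q a')⁻¹ * (q b)⁻¹))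
    (hq_add_right : ∀ a b b' : ZMod M,
      q (a + (b + b')) * (q a)⁻¹ * (q (b + b'))⁻¹ =
        (q (a + b) * (q a)⁻¹ * (q b)⁻¹) * (q (a + b') * (q a)⁻¹ * (q b')⁻¹)) :
    ∃! ξ : kˣ, ξ ^ (Nat.gcd (M ^ 2) (2 * M)) = 1 ∧
      ∀ a : ZMod M, q a = ξ ^ (a.val ^ 2) :=
  quadratic_form_on_zmod_classified_general M q hq_neg hq_add_left hq_add_right
end

section
/- Let M ≥ 2 be even and let ζ ∈ kˣ with ζ^M = 1. Let ι : ZMod (M/2) → ZMod M be the group homomorphism sending a to 2ā (doubling of the canonical representative). Then for all a,b,c ∈ ZMod (M/2), one has ω_ζ(ι(a), ι(b), ι(c)) = ω_{ζ²}(a,b,c), where on the left ω_ζ is the 3-cocycle on ZMod M attached to ζ and on the right ω_{ζ²} is the 3-cocycle on ZMod (M/2) attached to ζ². (Thus the restriction of ω_ζ to the index-2 subgroup of ℤ_M is the cocycle attached to ζ².) -/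
theorem ZMod.val_mod_self {n : ℕ} (x : ZMod n) : x.val % n = x.val := by
  rcases n with _ | n
  · exact Nat.mod_zero _
  · exact Nat.mod_eq_of_lt x.val_lt

theorem ZMod.val_natCast_mul_val (d : ℕ) {n : ℕ} (x : ZMod n) :
    ((d : ZMod (d * n)) * x.val).val = d * x.val := by
  rw [← Nat.cast_mul, ZMod.val_natCast, Nat.mul_mod_mul_left, x.val_mod_self]

theorem omegaZeta_natCast_mul_val {k : Type*} [Field k] {d : ℕ} (hd : 0 < d) (n : ℕ)
    (ζ : kˣ) (a b c : ZMod n) :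
    omegaZeta (d * n) ζ (d * a.val) (d * b.val) (d * c.val) = omegaZeta n (ζ ^ d) a b c := by
  simp only [omegaZeta, ZMod.val_natCast_mul_val, ← mul_add, Nat.mul_le_mul_left_iff hd,
    ← pow_mul]

theorem omegaZeta_restriction_to_index_two_subgroup_general
    {k : Type*} [Field k]
    (M : ℕ) (hMeven : Even M) (ζ : kˣ) :
    let ι : ZMod (M / 2) → ZMod M := fun a => (2 * a.val : ZMod M)
    ∀ a b c : ZMod (M / 2),
      omegaZeta M ζ (ι a) (ι b) (ι c) = omegaZeta (M / 2) (ζ ^ 2) a b c := by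
  intro ι a b c
  simp only [ι]
  generalize hn : M / 2 = n at a b c
  obtain rfl : M = 2 * n := by rcases hMeven with ⟨r, rfl⟩; omega
  exact_mod_cast omegaZeta_natCast_mul_val two_pos n ζ a b c

theorem omegaZeta_restriction_to_index_two_subgroup
    {k : Type*} [Field k] [IsAlgClosed k] [CharZero k]
    (M : ℕ) (hM : 2 ≤ M) (hMeven : Even M) (ζ : kˣ) (hζ : ζ ^ M = 1) :
    let ι : ZMod (M / 2) → ZMod M := fun a => (2 * a.val : ZMod M)
    ∀ a b c : ZMod (M / 2),
      omegaZeta M ζ (ι a) (ι b) (ι c) = omegaZeta (M / 2) (ζ ^ 2) a b c :=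
  omegaZeta_restriction_to_index_two_subgroup_general M hMeven ζ
end
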